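/- arXiv:1707.05915 — 3 statements merged into one kernel-verified Lean document; each statement's English description precedes it below -/
import Mathlib

section
/- Let M ≥ 2 be an integer and x_1,...,x_M be positive reals with sum equal to M. For any a>0, b>0, it holds that M^3/(aM+b) > Σ_{m=1}^M x_m^3/(a x_m + b) ≥ M/(a+b). -/
open Finset

/-- For `M ≥ 2` positive reals summing to `M`,
`M^3/(aM+b) > Σ x_m^3/(a x_m + b) ≥ M/(a+b)`. -/
theorem sum_cube_div_bounds (M : ℕ) (hM : 2 ≤ M) (a b : ℝ) (ha : 0 < a) (hb : 0 < b)
    (x : Fin M → ℝ) (hx : ∀ m, 0 < x m) (hsum : ∑ m, x m = M) :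
    (M : ℝ) ^ 3 / (a * M + b) > ∑ m, (x m) ^ 3 / (a * x m + b) ∧
      ∑ m, (x m) ^ 3 / (a * x m + b) ≥ M / (a + b) := by
  have hax : ∀ m, 0 < a * x m + b := fun m => by nlinarith [hx m]
  have hMpos : (0:ℝ) < M := by
    have : (2:ℝ) ≤ M := by exact_mod_cast hM
    linarith
  have haM : 0 < a * M + b := by nlinarith
  have hab : 0 < a + b := by linarith
  have hle : ∀ m, x m ≤ M := fun m => by
    rw [← hsum]
    exact Finset.single_le_sum (fun i _ => (hx i).le) (mem_univ m)
  constructor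
  · -- upper bound
    have i0 : Fin M := ⟨0, by omega⟩
    have i1 : Fin M := ⟨1, by omega⟩
    set j0 : Fin M := ⟨0, by omega⟩ with hj0
    set j1 : Fin M := ⟨1, by omega⟩ with hj1
    have hne : j0 ≠ j1 := by
      simp [hj0, hj1, Fin.ext_iff]
    have hpair : x j0 + x j1 ≤ M := by
      rw [← hsum]
      have hsub : ({j0, j1} : Finset (Fin M)) ⊆ univ := by simp
      have := Finset.sum_le_sum_of_subset_of_nonneg hsub
        (fun i _ _ => (hx i).le)
      simpa [Finset.sum_pair hne] using this
    have hj0lt : x j0 < M := by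
      have := hx j1; linarith
    have hptle : ∀ m, x m ^ 3 / (a * x m + b) ≤ x m * M ^ 2 / (a * M + b) := by
      intro m
      rw [div_le_div_iff₀ (hax m) haM]
      have h2 : 0 ≤ x m * ((M:ℝ) - x m) * (a * x m * M + b * (x m + M)) := by
        apply mul_nonneg (mul_nonneg (hx m).le (by linarith [hle m]))
        have := hx m; positivity
      nlinarith [h2]
    have hptlt : x j0 ^ 3 / (a * x j0 + b) < x j0 * M ^ 2 / (a * M + b) := by
      rw [div_lt_div_iff₀ (hax j0) haM]
      have h2 : 0 < x j0 * ((M:ℝ) - x j0) * (a * x j0 * M + b * (x j0 + M)) := by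
        apply mul_pos (mul_pos (hx j0) (by linarith))
        have := hx j0; positivity
      nlinarith [h2]
    have hsumlt : ∑ m, x m ^ 3 / (a * x m + b) < ∑ m, x m * M ^ 2 / (a * M + b) :=
      Finset.sum_lt_sum (fun i _ => hptle i) ⟨j0, mem_univ j0, hptlt⟩
    have : ∑ m, x m * M ^ 2 / (a * M + b) = (M:ℝ) ^ 3 / (a * M + b) := by
      rw [← Finset.sum_div, ← Finset.sum_mul, hsum]
      ring_nf
    linarith [hsumlt, this.ge, this.le]
  · -- lower bound
    have key : ∀ m, 1 / (a + b) + (2*a + 3*b) / (a + b) ^ 2 * (x m - 1)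
        ≤ x m ^ 3 / (a * x m + b) := by
      intro m
      rw [le_div_iff₀ (hax m), ← sub_nonneg]
      have h1 : (0:ℝ) < (a+b)^2 := by positivity
      have hfac : x m ^ 3 - (1 / (a + b) + (2*a + 3*b) / (a + b) ^ 2 * (x m - 1)) * (a * x m + b)
          = ((x m - 1)^2 * ((a+b)^2 * x m + b*(a+2*b))) / (a+b)^2 := by
        field_simp
        ring
      rw [hfac]
      apply div_nonneg _ h1.le
      have := hx m
      positivity
    calc ∑ m, x m ^ 3 / (a * x m + b)
        ≥ ∑ m, (1 / (a + b) + (2*a + 3*b) / (a + b) ^ 2 * (x m - 1)) :=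
          Finset.sum_le_sum (fun i _ => key i)
      _ = M / (a + b) := by
          rw [Finset.sum_add_distrib, ← Finset.mul_sum, Finset.sum_sub_distrib, hsum]
          simp [Finset.card_univ]
          field_simp
end

section
/- Let M ≥ 2 be an integer and x_1,...,x_M be positive reals with sum equal to M. For any a>0, b>0, it holds that M^4/(aM+b)^2 > Σ_{m=1}^M x_m^4/(a x_m + b)^2 ≥ M/(a+b)^2. -/
/-!
Put `g m = x m ^ 2 / (a * x m + b)`, so that the summands are `g m ^ 2`.
The map `t ↦ t ^ 2 / (a * t + b)` is superadditive on `t ≥ 0`, hence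
`∑ g ≤ M ^ 2 / (a * M + b)`;
since there are at least two positive `g m`, `∑ g ^ 2 < (∑ g) ^ 2`, which gives the upper bound.
For the lower bound, Sedrakyan's lemma gives `∑ g ≥ M ^ 2 / ∑ (a * x m + b) = M / (a + b)`,
and Cauchy–Schwarz gives `∑ g ^ 2 ≥ (∑ g) ^ 2 / M`.
-/

open Finset

lemma sq_div_add_sq_div_le {a b x y : ℝ} (ha : 0 ≤ a) (hb : 0 < b)
    (hx : 0 ≤ x) (hy : 0 ≤ y) :
    x ^ 2 / (a * x + b) + y ^ 2 / (a * y + b) ≤ (x + y) ^ 2 / (a * (x + y) + b) := by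
  rw [div_add_div _ _ (by positivity) (by positivity),
    div_le_div_iff₀ (by positivity) (by positivity)]
  have key : (x + y) ^ 2 * ((a * x + b) * (a * y + b))
      - (x ^ 2 * (a * y + b) + (a * x + b) * y ^ 2) * (a * (x + y) + b)
      = b * (x * y) * (a * (x + y) + 2 * b) := by ring
  have : 0 ≤ b * (x * y) * (a * (x + y) + 2 * b) := by positivity
  linarith

lemma sum_sq_div_le_sq_sum_div {ι : Type*} (s : Finset ι) {a b : ℝ} (ha : 0 ≤ a) (hb : 0 < b)
    {x : ι → ℝ} (hx : ∀ i ∈ s, 0 ≤ x i) :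
    ∑ i ∈ s, x i ^ 2 / (a * x i + b) ≤
      (∑ i ∈ s, x i) ^ 2 / (a * ∑ i ∈ s, x i + b) := by
  induction s using Finset.cons_induction with
  | empty => simp
  | cons i s hi ih =>
    simp only [forall_mem_cons] at hx
    rw [sum_cons, sum_cons]
    calc x i ^ 2 / (a * x i + b) + ∑ j ∈ s, x j ^ 2 / (a * x j + b)
        ≤ x i ^ 2 / (a * x i + b) + (∑ j ∈ s, x j) ^ 2 / (a * ∑ j ∈ s, x j + b) := by
          gcongr; exact ih hx.2
      _ ≤ _ := sq_div_add_sq_div_le ha hb hx.1 (sum_nonneg hx.2)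

lemma sq_sum_div_le_sum_sq_div_mul_add {ι : Type*} (s : Finset ι) {a b : ℝ} {x : ι → ℝ}
    (hx : ∀ i ∈ s, 0 < a * x i + b) :
    (∑ i ∈ s, x i) ^ 2 / (a * ∑ i ∈ s, x i + #s * b) ≤
      ∑ i ∈ s, x i ^ 2 / (a * x i + b) := by
  have hden : ∑ i ∈ s, (a * x i + b) = a * ∑ i ∈ s, x i + #s * b := by
    rw [sum_add_distrib, ← mul_sum, sum_const, nsmul_eq_mul]
  rw [← hden]
  exact sq_sum_div_le_sum_sq_div s x hx

lemma sum_sq_lt_sq_sum_of_pos {ι : Type*} {s : Finset ι} (hs : 1 < #s) {f : ι → ℝ}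
    (hf : ∀ i ∈ s, 0 < f i) : ∑ i ∈ s, f i ^ 2 < (∑ i ∈ s, f i) ^ 2 := by
  classical
  have hlt : ∀ i ∈ s, f i < ∑ j ∈ s, f j := by
    intro i hi
    have hne : (s.erase i).Nonempty := by
      rw [← card_pos, card_erase_of_mem hi]; omega
    have := sum_pos (fun j hj => hf j (mem_of_mem_erase hj)) hne
    rw [← add_sum_erase s f hi]
    linarith
  calc ∑ i ∈ s, f i ^ 2 < ∑ i ∈ s, f i * ∑ j ∈ s, f j :=
        sum_lt_sum_of_nonempty (card_pos.mp (by omega)) fun i hi => by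
          rw [sq]; exact mul_lt_mul_of_pos_left (hlt i hi) (hf i hi)
    _ = (∑ i ∈ s, f i) ^ 2 := by rw [← sum_mul, sq]

/-- For `M ≥ 2` positive reals summing to `M`,
`M^4/(aM+b)^2 > Σ x_m^4/(a x_m + b)^2 ≥ M/(a+b)^2`. -/
theorem sum_quart_div_sq_bounds (M : ℕ) (hM : 2 ≤ M) (a b : ℝ) (ha : 0 < a) (hb : 0 < b)
    (x : Fin M → ℝ) (hx : ∀ m, 0 < x m) (hsum : ∑ m, x m = M) :
    (M : ℝ) ^ 4 / (a * M + b) ^ 2 > ∑ m, (x m) ^ 4 / (a * x m + b) ^ 2 ∧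
      ∑ m, (x m) ^ 4 / (a * x m + b) ^ 2 ≥ M / (a + b) ^ 2 := by
  have hMpos : (0 : ℝ) < M := by exact_mod_cast (by omega : 0 < M)
  have hcard : #(univ : Finset (Fin M)) = M := card_fin M
  have hden : ∀ m, 0 < a * x m + b := fun m => by have := hx m; positivity
  have hsq : ∀ m, x m ^ 4 / (a * x m + b) ^ 2 = (x m ^ 2 / (a * x m + b)) ^ 2 := fun m => by
    rw [div_pow, ← pow_mul]
  simp only [hsq]
  set g : Fin M → ℝ := fun m => x m ^ 2 / (a * x m + b)
  have hg : ∀ m, 0 < g m := fun m => div_pos (pow_pos (hx m) 2) (hden m)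
  set S := ∑ m, g m
  have hupper : S ≤ (M : ℝ) ^ 2 / (a * M + b) := by
    simpa only [hsum] using sum_sq_div_le_sq_sum_div univ ha.le hb fun m _ => (hx m).le
  have hlower : (M : ℝ) / (a + b) ≤ S := by
    have := sq_sum_div_le_sum_sq_div_mul_add univ fun m _ => hden m
    rw [hsum, hcard] at this
    calc (M : ℝ) / (a + b) = (M : ℝ) ^ 2 / (a * M + M * b) := by field_simp
      _ ≤ S := this
  constructor
  · calc ∑ m, g m ^ 2 < S ^ 2 := sum_sq_lt_sq_sum_of_pos (by omega) fun m _ => hg m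
      _ ≤ ((M : ℝ) ^ 2 / (a * M + b)) ^ 2 := by
          gcongr; exact sum_nonneg fun m _ => (hg m).le
      _ = (M : ℝ) ^ 4 / (a * M + b) ^ 2 := by rw [div_pow, ← pow_mul]
  · calc (M : ℝ) / (a + b) ^ 2 = ((M : ℝ) / (a + b)) ^ 2 / M := by field_simp
      _ ≤ S ^ 2 / M := by gcongr
      _ ≤ ∑ m, g m ^ 2 := by
          rw [div_le_iff₀ hMpos, mul_comm]
          simpa only [hcard] using sq_sum_le_card_mul_sum_sq (s := univ) (f := g)
end

section
/- Let M ≥ 2 be an integer and x_1,...,x_M be positive reals with sum equal to M. For any a>0, b>0, it holds that M^3/(aM+b)^2 > Σ_{m=1}^M x_m^3/(a x_m + b)^2 ≥ M/(a+b)^2. -/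
open Finset

/-- For `M ≥ 2` positive reals summing to `M`,
`M^3/(aM+b)^2 > Σ x_m^3/(a x_m + b)^2 ≥ M/(a+b)^2`. -/
theorem sum_cube_div_sq_bounds (M : ℕ) (hM : 2 ≤ M) (a b : ℝ) (ha : 0 < a) (hb : 0 < b)
    (x : Fin M → ℝ) (hx : ∀ m, 0 < x m) (hsum : ∑ m, x m = M) :
    (M : ℝ) ^ 3 / (a * M + b) ^ 2 > ∑ m, (x m) ^ 3 / (a * x m + b) ^ 2 ∧
      ∑ m, (x m) ^ 3 / (a * x m + b) ^ 2 ≥ M / (a + b) ^ 2 := by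
  have hMpos : (0:ℝ) < M := by
    have : (2:ℝ) ≤ M := by exact_mod_cast hM
    linarith
  have hab : (0:ℝ) < a + b := by linarith
  have hMb : (0:ℝ) < a * M + b := by nlinarith
  have hxM : ∀ m, x m < M := by
    intro m
    have hne : (Finset.univ.erase m).Nonempty := by
      rw [← Finset.card_pos, Finset.card_erase_of_mem (Finset.mem_univ m),
        Finset.card_univ, Fintype.card_fin]
      omega
    have hpos : 0 < ∑ k ∈ Finset.univ.erase m, x k :=
      Finset.sum_pos (fun k _ => hx k) hne
    have heq : x m + ∑ k ∈ Finset.univ.erase m, x k = M := by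
      rw [Finset.add_sum_erase _ _ (Finset.mem_univ m)]; exact hsum
    linarith
  have hne : (Finset.univ : Finset (Fin M)).Nonempty := by
    rw [← Finset.card_pos, Finset.card_univ, Fintype.card_fin]; omega
  constructor
  · -- upper bound
    have key : ∀ m ∈ (Finset.univ : Finset (Fin M)),
        (x m) ^ 3 / (a * x m + b) ^ 2 < x m * ((M:ℝ)^2 / (a * M + b) ^ 2) := by
      intro m _
      have hx0 := hx m
      have hxb : (0:ℝ) < a * x m + b := by nlinarith
      have hd : (0:ℝ) < (a * x m + b) ^ 2 := by positivity
      have hd2 : (0:ℝ) < (a * M + b) ^ 2 := by positivity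
      rw [mul_div_assoc' (x m), div_lt_div_iff₀ hd hd2]
      have hlt := hxM m
      have hfac : 0 < x m * (a * M + b) + (M:ℝ) * (a * x m + b) := by positivity
      nlinarith [mul_pos (mul_pos (mul_pos hx0 hb) (sub_pos.2 hlt)) hfac]
    have hlt := Finset.sum_lt_sum_of_nonempty hne key
    have heq : ∑ m, x m * ((M:ℝ)^2 / (a * M + b) ^ 2)
        = (M : ℝ) ^ 3 / (a * M + b) ^ 2 := by
      rw [← Finset.sum_mul, hsum]; ring
    linarith
  · -- lower bound: tangent line trick at x = 1
    have key : ∀ m ∈ (Finset.univ : Finset (Fin M)),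
        1 / (a + b) ^ 2 + (a + 3*b) / (a + b) ^ 3 * (x m - 1)
          ≤ (x m) ^ 3 / (a * x m + b) ^ 2 := by
      intro m _
      have hx0 := hx m
      have hxb : (0:ℝ) < a * x m + b := by nlinarith
      have hd : (0:ℝ) < (a * x m + b) ^ 2 := by positivity
      have hA : (0:ℝ) < (a + b) ^ 3 := by positivity
      have hrw : 1 / (a + b) ^ 2 + (a + 3*b) / (a + b) ^ 3 * (x m - 1)
          = ((a + b) + (a + 3*b) * (x m - 1)) / (a + b) ^ 3 := by
        field_simp
      rw [hrw, div_le_div_iff₀ hA hd]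
      nlinarith [mul_nonneg (mul_nonneg (by positivity : (0:ℝ) ≤ 3*a*b^2) hx0.le)
          (sq_nonneg (x m - 1)),
        mul_nonneg (mul_nonneg (by positivity : (0:ℝ) ≤ b^3) (sq_nonneg (x m - 1)))
          (by linarith : (0:ℝ) ≤ x m + 2)]
    have hle := Finset.sum_le_sum key
    have heq : ∑ m, (1 / (a + b) ^ 2 + (a + 3*b) / (a + b) ^ 3 * (x m - 1))
        = (M:ℝ) / (a + b) ^ 2 := by
      simp only [Finset.sum_add_distrib, Finset.sum_const, Finset.card_univ,
        Fintype.card_fin, nsmul_eq_mul, ← Finset.mul_sum, Finset.sum_sub_distrib, hsum,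
        mul_one]
      ring
    linarith
end
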